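/- Let G = (V, E, w) be a weighted undirected graph with positive edge weights, let k ≥ 1 and r ≥ 2 be integers, and let H be the Thorup–Zwick-style hopset built from a hierarchy V = V_0 ⊇ V_1 ⊇ ⋯ ⊇ V_k ⊇ V_{k+1} = ∅ with pivots and bunches as defined below. Define h_0 = 1 and h_i = (r+1)·h_{i−1} + r for i ∈ [1, k]. Then for any fixed real μ > 0, for all i ∈ [0, k] and any pair u, v ∈ V with dist_G(u, v) ≤ r^i·μ, at least one of the following holds: (i) dist_{G∪H}^{(h_i)}(u, v) ≤ dist_G(u, v) + ((r+4)^i − r^i)·μ; (ii) there exists u' ∈ V_{i+1} such that dist_{G∪H}^{(h_i)}(u, u') ≤ (r+4)^i·μ. -/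

import Mathlib

open scoped ENNReal
open Classical

/-- Hop-bounded distance: minimum total weight of a walk with at most `β` edges. -/
noncomputable def hopDist {V : Type*} (w : V → V → ℝ≥0∞) : ℕ → V → V → ℝ≥0∞
  | 0, u, v => if u = v then 0 else ⊤
  | β + 1, u, v => hopDist w β u v ⊓ ⨅ x, w u x + hopDist w β x v

/-- Shortest-path distance (infimum over all hop bounds). -/
noncomputable def gdist {V : Type*} (w : V → V → ℝ≥0∞) (u v : V) : ℝ≥0∞ :=
  ⨅ β, hopDist w β u v

/-- The graph `G ∪ H`: add each edge of `H` with weight equal to the `G`-distance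
between its endpoints. -/
noncomputable def addShortcuts {V : Type*} (w : V → V → ℝ≥0∞) (H : Set (V × V)) :
    V → V → ℝ≥0∞ :=
  fun u v => w u v ⊓ (if (u, v) ∈ H ∨ (v, u) ∈ H then gdist w u v else ⊤)

/-- Distance from `v` to its level-`j` pivot `p j v`; by convention it is `⊤`
for `j = k+1` (the pivot `p (k+1) v` does not exist). -/
noncomputable def pivotDist {V : Type*} (w : V → V → ℝ≥0∞) (p : ℕ → V → V) (k : ℕ)
    (j : ℕ) (v : V) : ℝ≥0∞ :=
  if j ≤ k then gdist w v (p j v) else ⊤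

/-- The Thorup–Zwick-style hopset: for each `i ∈ [0,k]` and each vertex `v` of level
exactly `i` (i.e. `v ∈ Vs i \ Vs (i+1)`), add the edges from `v` to all vertices of its
bunch `B(v) = {u ∈ Vs i : dist(v,u) < dist(v, p (i+1) v)}` and (when `i < k`) to its
pivot `p (i+1) v`. -/
def tzHopset {V : Type*} (w : V → V → ℝ≥0∞) (Vs : ℕ → Set V) (p : ℕ → V → V) (k : ℕ) :
    Set (V × V) :=
  { e | ∃ i ≤ k, e.1 ∈ Vs i ∧ e.1 ∉ Vs (i + 1) ∧
        ((e.2 ∈ Vs i ∧ gdist w e.1 e.2 < pivotDist w p k (i + 1) e.1) ∨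
          (i < k ∧ e.2 = p (i + 1) e.1)) }

/-- The hopcount sequence `h_0 = 1`, `h_i = (r+1)·h_{i-1} + r`. -/
def hopSeq (r : ℕ) : ℕ → ℕ
  | 0 => 1
  | i + 1 => (r + 1) * hopSeq r i + r

/-!
Induction on `i`. Cut a shortest `u`–`v` path, of length at most `r^(i+1) μ`, greedily into at
most `r` pieces of length at most `r^i μ` joined by single edges. By induction a piece is either
good (an `h_i`-hop route with additive error `D_i = ((r+4)^i - r^i) μ`) or both of its ends lie
within `K_i = (r+4)^i μ`, in `h_i` hops, of `V_(i+1)`. If all pieces are good they glue together.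
Otherwise let `a` start the first bad piece and `b` end the last one, with nearby `u'`, `v'` in
`V_(i+1)`. Then `dist(u', v') ≤ dist(a, b) + 2 K_i`, and the hopset contains either the bunch edge
`u' v'`, which closes a route with error `r D_i + 4 K_i = D_(i+1)`, or the pivot edge from `u'`
into `V_(i+2)`, which gives the second alternative. The base case is the same bunch-or-pivot
dichotomy.
-/

variable {V : Type*}

section HopDist

variable (w : V → V → ℝ≥0∞)

lemma hopDist_succ (β : ℕ) (u v : V) :
    hopDist w (β + 1) u v = hopDist w β u v ⊓ ⨅ x, w u x + hopDist w β x v := rfl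

lemma hopDist_antitone (u v : V) : Antitone fun β => hopDist w β u v :=
  antitone_nat_of_succ_le fun _ => inf_le_left

@[simp]
lemma hopDist_self (β : ℕ) (v : V) : hopDist w β v v = 0 :=
  nonpos_iff_eq_zero.1 ((hopDist_antitone w v v (Nat.zero_le β)).trans_eq (by simp [hopDist]))

lemma hopDist_one_le (u v : V) : hopDist w 1 u v ≤ w u v :=
  inf_le_right.trans (iInf_le_of_le v (by simp))

lemma hopDist_add_le (β₁ β₂ : ℕ) (u x v : V) :
    hopDist w (β₁ + β₂) u v ≤ hopDist w β₁ u x + hopDist w β₂ x v := by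
  induction β₁ generalizing u with
  | zero =>
    by_cases h : u = x
    · subst h; simp
    · simp [hopDist, h]
  | succ β ih =>
    rw [Nat.succ_add, hopDist_succ, hopDist_succ, ← min_add_add_right, ENNReal.iInf_add]
    refine inf_le_inf (ih u) (le_iInf fun y => iInf_le_of_le y ?_)
    rw [add_assoc]
    exact add_le_add_right (ih y) _

lemma hopDist_le_add {β₁ β₂ β : ℕ} (hβ : β₁ + β₂ ≤ β) (u x v : V) :
    hopDist w β u v ≤ hopDist w β₁ u x + hopDist w β₂ x v :=
  (hopDist_antitone w u v hβ).trans (hopDist_add_le w β₁ β₂ u x v)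

variable {w} in
lemma hopDist_comm (hw : ∀ a b, w a b = w b a) (β : ℕ) (u v : V) :
    hopDist w β u v = hopDist w β v u := by
  suffices h : ∀ β u v, hopDist w β u v ≤ hopDist w β v u from le_antisymm (h β u v) (h β v u)
  intro β
  induction β with
  | zero =>
    intro u v
    by_cases h : u = v
    · simp [h]
    · simp [hopDist, h, Ne.symm h]
  | succ β ih =>
    intro u v
    refine le_inf ((hopDist_antitone w u v β.le_succ).trans (ih u v)) (le_iInf fun x => ?_)
    -- peel off the last edge `x v` instead of the first one
    calc hopDist w (β + 1) u v ≤ hopDist w β u x + hopDist w 1 x v := hopDist_add_le w β 1 u x v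
      _ ≤ hopDist w β x u + w x v := add_le_add (ih u x) (hopDist_one_le w x v)
      _ = w v x + hopDist w β x u := by rw [hw, add_comm]

lemma gdist_le_hopDist (β : ℕ) (u v : V) : gdist w u v ≤ hopDist w β u v := iInf_le _ β

@[simp]
lemma gdist_self (v : V) : gdist w v v = 0 :=
  nonpos_iff_eq_zero.1 ((gdist_le_hopDist w 0 v v).trans_eq (hopDist_self w 0 v))

lemma gdist_le_weight (u v : V) : gdist w u v ≤ w u v :=
  (gdist_le_hopDist w 1 u v).trans (hopDist_one_le w u v)

lemma gdist_triangle (u x v : V) : gdist w u v ≤ gdist w u x + gdist w x v := by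
  simp only [gdist, ENNReal.iInf_add, ENNReal.add_iInf]
  exact le_iInf₂ fun β₂ β₁ => (iInf_le _ _).trans (hopDist_add_le w β₁ β₂ u x v)

variable {w} in
lemma gdist_comm (hw : ∀ a b, w a b = w b a) (u v : V) : gdist w u v = gdist w v u :=
  iInf_congr fun β => hopDist_comm hw β u v

end HopDist

section Walks

variable (w : V → V → ℝ≥0∞)

/-- Weight of the walk that starts at `x` and then visits the vertices of `t` in order; it ends
at `t.getLastD x`. -/
noncomputable def walkWeight : V → List V → ℝ≥0∞
  | _, [] => 0
  | x, z :: t => w x z + walkWeight z t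

lemma walkWeight_append (t₁ t₂ : List V) (x : V) :
    walkWeight w x (t₁ ++ t₂) = walkWeight w x t₁ + walkWeight w (t₁.getLastD x) t₂ := by
  induction t₁ generalizing x with
  | nil => simp [walkWeight]
  | cons z t ih => simp only [List.cons_append, walkWeight, ih, List.getLastD_cons, add_assoc]

lemma hopDist_le_walkWeight (t : List V) (x : V) :
    hopDist w t.length x (t.getLastD x) ≤ walkWeight w x t := by
  induction t generalizing x with
  | nil => simp [walkWeight]
  | cons z t ih =>
    rw [List.getLastD_cons]
    exact inf_le_right.trans (iInf_le_of_le z (add_le_add_right (ih z) _))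

lemma exists_walkWeight_le_hopDist [Finite V] {β : ℕ} {u v : V} (h : hopDist w β u v ≠ ⊤) :
    ∃ t : List V, t.getLastD u = v ∧ walkWeight w u t ≤ hopDist w β u v := by
  induction β generalizing u with
  | zero =>
    by_cases huv : u = v
    · exact ⟨[], huv, by simp [walkWeight]⟩
    · simp [hopDist, huv] at h
  | succ β ih =>
    have : Nonempty V := ⟨u⟩
    rw [hopDist_succ] at h ⊢
    rcases le_total (hopDist w β u v) (⨅ x, w u x + hopDist w β x v) with hmin | hmin
    · rw [inf_eq_left.2 hmin] at h ⊢
      exact ih h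
    · rw [inf_eq_right.2 hmin] at h ⊢
      obtain ⟨x, hx⟩ := exists_eq_ciInf_of_finite (f := fun x => w u x + hopDist w β x v)
      rw [← hx] at h ⊢
      obtain ⟨t, rfl, ht⟩ := ih (ENNReal.add_ne_top.1 h).2
      exact ⟨x :: t, List.getLastD_cons, add_le_add_right ht _⟩

lemma exists_nodup_walk (t : List V) (x : V) :
    ∃ t' : List V, (x :: t').Nodup ∧ t'.getLastD x = t.getLastD x ∧
      walkWeight w x t' ≤ walkWeight w x t := by
  induction t generalizing x with
  | nil => exact ⟨[], List.nodup_singleton x, rfl, le_rfl⟩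
  | cons z t ih =>
    obtain ⟨t', hnd, hend, hle⟩ := ih z
    have hle' : walkWeight w x (z :: t') ≤ walkWeight w x (z :: t) := add_le_add_right hle _
    by_cases hx : x ∈ z :: t'
    · -- cut out the closed walk from `x` back to `x`
      obtain ⟨l₁, l₂, hsplit⟩ := List.append_of_mem hx
      refine ⟨l₂, hnd.sublist (hsplit ▸ List.sublist_append_right l₁ (x :: l₂)), ?_, ?_⟩
      · have : (z :: t').getLastD x = l₂.getLastD x := by rw [hsplit]; simp [List.getLast?_cons]
        rw [List.getLastD_cons, ← hend, ← this, List.getLastD_cons]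
      · refine le_trans ?_ hle'
        rw [hsplit, walkWeight_append, walkWeight]
        exact le_add_self.trans le_add_self
    · exact ⟨z :: t', List.nodup_cons.2 ⟨hx, hnd⟩, by simp only [List.getLastD_cons, hend], hle'⟩

lemma gdist_eq_hopDist_card [Fintype V] (u v : V) :
    gdist w u v = hopDist w (Fintype.card V) u v := by
  refine le_antisymm (gdist_le_hopDist w _ u v) (le_iInf fun β => ?_)
  by_cases hβ : hopDist w β u v = ⊤
  · simp [hβ]
  obtain ⟨t, rfl, ht⟩ := exists_walkWeight_le_hopDist w hβ
  obtain ⟨t', hnd, hend, hle⟩ := exists_nodup_walk w t u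
  have hlen : t'.length ≤ Fintype.card V := (Nat.le_succ _).trans hnd.length_le_card
  calc hopDist w (Fintype.card V) u (t.getLastD u)
      ≤ hopDist w t'.length u (t'.getLastD u) := hend ▸ hopDist_antitone w _ _ hlen
    _ ≤ walkWeight w u t := (hopDist_le_walkWeight w t' u).trans hle
    _ ≤ hopDist w β u (t.getLastD u) := ht

lemma exists_walkWeight_le_gdist [Fintype V] {u v : V} (h : gdist w u v ≠ ⊤) :
    ∃ t : List V, t.getLastD u = v ∧ walkWeight w u t ≤ gdist w u v := by
  rw [gdist_eq_hopDist_card] at h ⊢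
  exact exists_walkWeight_le_hopDist w h

end Walks

section Shortcuts

variable {w : V → V → ℝ≥0∞} {H : Set (V × V)}

lemma addShortcuts_le (a b : V) : addShortcuts w H a b ≤ w a b := inf_le_left

lemma hopDist_addShortcuts_one_le {x y : V} (hxy : (x, y) ∈ H) :
    hopDist (addShortcuts w H) 1 x y ≤ gdist w x y :=
  (hopDist_one_le _ x y).trans (inf_le_right.trans_eq (if_pos (Or.inl hxy)))

lemma addShortcuts_comm (hw : ∀ a b, w a b = w b a) (a b : V) :
    addShortcuts w H a b = addShortcuts w H b a := by
  simp only [addShortcuts, hw a b, gdist_comm hw a b, or_comm]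

lemma gdist_le_hopDist_addShortcuts (β : ℕ) (x y : V) :
    gdist w x y ≤ hopDist (addShortcuts w H) β x y := by
  induction β generalizing x with
  | zero =>
    by_cases h : x = y
    · simp [h]
    · simp [hopDist, h]
  | succ β ih =>
    refine le_inf (ih x) (le_iInf fun z => ?_)
    calc gdist w x y ≤ gdist w x z + gdist w z y := gdist_triangle w x z y
      _ ≤ addShortcuts w H x z + hopDist (addShortcuts w H) β z y := by
        refine add_le_add (le_inf (gdist_le_weight w x z) ?_) (ih z)
        split_ifs <;> simp

end Shortcuts

/-- A route from `x` to `y` made of `e + 1` pieces of `G`-length at most `L`, consecutive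
pieces being joined by an edge of `G`; `c` is its total length. -/
inductive PieceChain (w : V → V → ℝ≥0∞) (L : ℝ≥0∞) : V → V → ℕ → ℝ≥0∞ → Prop
  | single {a b : V} : gdist w a b ≤ L → PieceChain w L a b 0 (gdist w a b)
  | cons {a b z y : V} {e : ℕ} {c : ℝ≥0∞} : gdist w a b ≤ L → PieceChain w L z y e c →
      PieceChain w L a y (e + 1) (gdist w a b + w b z + c)

/-- Greedy cutting of a walk, whose current piece runs from `a` to `x` and has length `s`. -/
lemma exists_pieceChain_of_walk {w : V → V → ℝ≥0∞} {L : ℝ≥0∞} (hL : L ≠ ⊤) (t : List V)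
    {a x : V} {s : ℝ≥0∞} {e : ℕ} (hax : gdist w a x ≤ s) (hs : s ≤ L)
    (ht : s + walkWeight w x t ≤ (e + 1) * L) :
    ∃ e' ≤ e, ∃ c ≤ s + walkWeight w x t, PieceChain w L a (t.getLastD x) e' c := by
  induction t generalizing a x s e with
  | nil => exact ⟨0, e.zero_le, _, by simpa [walkWeight] using hax, .single (hax.trans hs)⟩
  | cons z t ih =>
    rw [walkWeight, List.getLastD_cons, ← add_assoc] at *
    by_cases hz : s + w x z ≤ L
    · exact ih ((gdist_triangle w a x z).trans (add_le_add hax (gdist_le_weight w x z))) hz ht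
    -- the piece cannot absorb the edge `x z`: close it at `x` and start a new one at `z`
    rw [not_le] at hz
    rcases e with _ | e
    · exact absurd (hz.trans_le (le_self_add.trans (ht.trans_eq (by simp)))) (lt_irrefl L)
    have hrest : walkWeight w z t ≤ (e + 1) * L := by
      refine ENNReal.le_of_add_le_add_right hL ?_
      calc walkWeight w z t + L ≤ s + w x z + walkWeight w z t := by
            rw [add_comm]; exact add_le_add_left hz.le _
        _ ≤ ((e + 1 : ℕ) + 1) * L := ht
        _ = (e + 1) * L + L := by push_cast; ring
    obtain ⟨e', he', c, hc, hchain⟩ :=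
      ih (a := z) (x := z) (s := 0) (by simp) zero_le (by simpa using hrest)
    refine ⟨e' + 1, by omega, _, ?_, .cons (hax.trans hs) hchain⟩
    rw [zero_add] at hc
    exact add_le_add (add_le_add_left hax _) hc

section StepAnalysis

variable {w : V → V → ℝ≥0∞} {H : Set (V × V)} {S T : Set V} {h : ℕ} {L D K : ℝ≥0∞}

local notation "w⁺" => addShortcuts w H

lemma hopDist_le_or_near_of_gdist_le (hw : ∀ a b, w a b = w b a)
    (hstep : ∀ x y, gdist w x y ≤ L →
      hopDist w⁺ h x y ≤ gdist w x y + D ∨ ∃ s ∈ S, hopDist w⁺ h x s ≤ K)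
    {a b : V} (hab : gdist w a b ≤ L) :
    hopDist w⁺ h a b ≤ gdist w a b + D ∨
      (∃ s ∈ S, hopDist w⁺ h a s ≤ K) ∧ ∃ s ∈ S, hopDist w⁺ h s b ≤ K := by
  have hws := addShortcuts_comm (H := H) hw
  rcases hstep a b hab with hgood | ha
  · exact Or.inl hgood
  rcases hstep b a (gdist_comm hw b a ▸ hab) with hgood | ⟨s, hs, hbs⟩
  · exact Or.inl (by rwa [hopDist_comm hws, gdist_comm hw] at hgood)
  · exact Or.inr ⟨ha, s, hs, hopDist_comm hws h s b ▸ hbs⟩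

/-- Either every piece is good, or `a` starts the first bad piece and `b` ends the last one. -/
theorem PieceChain.hopDist_le_or (hw : ∀ a b, w a b = w b a)
    (hstep : ∀ x y, gdist w x y ≤ L →
      hopDist w⁺ h x y ≤ gdist w x y + D ∨ ∃ s ∈ S, hopDist w⁺ h x s ≤ K)
    {x y : V} {e : ℕ} {c : ℝ≥0∞} (hc : PieceChain w L x y e c) :
    hopDist w⁺ (e * (h + 1) + h) x y ≤ c + (e + 1) * D ∨
      ∃ a b m₁ m₂, m₁ + m₂ ≤ e ∧ (∃ s ∈ S, hopDist w⁺ h a s ≤ K) ∧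
        (∃ s ∈ S, hopDist w⁺ h s b ≤ K) ∧
        hopDist w⁺ (m₁ * (h + 1)) x a + gdist w a b + hopDist w⁺ (m₂ * (h + 1)) b y ≤
          c + (e + 1) * D := by
  induction hc with
  | @single a b hab =>
    rcases hopDist_le_or_near_of_gdist_le hw hstep hab with hgood | ⟨ha, hb⟩
    · left; simpa using hgood
    · exact Or.inr ⟨a, b, 0, 0, le_rfl, ha, hb, by simp⟩
  | @cons a b z y e c hab _ ih =>
    have hbz : hopDist w⁺ 1 b z ≤ w b z := (hopDist_one_le _ b z).trans (addShortcuts_le b z)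
    have hD : (e + 1 : ℝ≥0∞) * D ≤ ((e + 1 : ℕ) + 1) * D := by gcongr; exact le_self_add
    rcases hopDist_le_or_near_of_gdist_le hw hstep hab with hgood | ⟨ha, hb⟩ <;>
      rcases ih with hrest | ⟨a', b', m₁, m₂, hm, ha', hb', hsum⟩
    · left
      calc hopDist w⁺ ((e + 1) * (h + 1) + h) a y
          ≤ hopDist w⁺ h a b + (hopDist w⁺ 1 b z + hopDist w⁺ (e * (h + 1) + h) z y) :=
            (hopDist_le_add (β₁ := h) (β₂ := 1 + (e * (h + 1) + h)) _ (le_of_eq (by ring))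
              a b y).trans (add_le_add_right (hopDist_add_le _ 1 _ b z y) _)
        _ ≤ gdist w a b + D + (w b z + (c + (e + 1) * D)) := by gcongr
        _ = gdist w a b + w b z + c + ((e + 1 : ℕ) + 1) * D := by push_cast; ring
    · refine Or.inr ⟨a', b', m₁ + 1, m₂, by omega, ha', hb', ?_⟩
      have hpre : hopDist w⁺ ((m₁ + 1) * (h + 1)) a a' ≤
          hopDist w⁺ h a b + (hopDist w⁺ 1 b z + hopDist w⁺ (m₁ * (h + 1)) z a') :=
        (hopDist_le_add (β₁ := h) (β₂ := 1 + m₁ * (h + 1)) _ (le_of_eq (by ring)) a b a').trans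
          (add_le_add_right (hopDist_add_le _ 1 _ b z a') _)
      calc hopDist w⁺ ((m₁ + 1) * (h + 1)) a a' + gdist w a' b' + hopDist w⁺ (m₂ * (h + 1)) b' y
          ≤ gdist w a b + D + (w b z + hopDist w⁺ (m₁ * (h + 1)) z a') + gdist w a' b' +
              hopDist w⁺ (m₂ * (h + 1)) b' y := by grw [hpre, hgood, hbz]
        _ = gdist w a b + w b z + (hopDist w⁺ (m₁ * (h + 1)) z a' + gdist w a' b' +
              hopDist w⁺ (m₂ * (h + 1)) b' y) + D := by ring
        _ ≤ gdist w a b + w b z + (c + (e + 1) * D) + D := by gcongr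
        _ = gdist w a b + w b z + c + ((e + 1 : ℕ) + 1) * D := by push_cast; ring
    · refine Or.inr ⟨a, b, 0, e + 1, by omega, ha, hb, ?_⟩
      have hsuf : hopDist w⁺ ((e + 1) * (h + 1)) b y ≤
          hopDist w⁺ 1 b z + hopDist w⁺ (e * (h + 1) + h) z y :=
        hopDist_le_add (β₁ := 1) _ (le_of_eq (by ring)) b z y
      calc hopDist w⁺ (0 * (h + 1)) a a + gdist w a b + hopDist w⁺ ((e + 1) * (h + 1)) b y
          ≤ gdist w a b + w b z + c + (e + 1) * D := by
            grw [hsuf, hbz, hrest]; simp only [zero_mul, hopDist_self, zero_add, add_assoc]; rfl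
        _ ≤ gdist w a b + w b z + c + ((e + 1 : ℕ) + 1) * D := by gcongr
    · refine Or.inr ⟨a, b', 0, m₂, by omega, ha, hb', ?_⟩
      -- the bad stretch now runs from `a` to `b'`
      have hab' : gdist w a b' ≤ gdist w a b + w b z +
          (hopDist w⁺ (m₁ * (h + 1)) z a' + gdist w a' b') :=
        calc gdist w a b' ≤ gdist w a b + gdist w b z + (gdist w z a' + gdist w a' b') :=
              (gdist_triangle w a z b').trans (add_le_add (gdist_triangle w a b z)
                (gdist_triangle w z a' b'))
          _ ≤ _ := by grw [gdist_le_weight w b z, gdist_le_hopDist_addShortcuts (m₁ * (h + 1)) z a']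
      calc hopDist w⁺ (0 * (h + 1)) a a + gdist w a b' + hopDist w⁺ (m₂ * (h + 1)) b' y
          ≤ gdist w a b + w b z + (hopDist w⁺ (m₁ * (h + 1)) z a' + gdist w a' b' +
              hopDist w⁺ (m₂ * (h + 1)) b' y) := by
            grw [hab']; simp only [zero_mul, hopDist_self, zero_add, add_assoc]; rfl
        _ ≤ gdist w a b + w b z + c + (e + 1) * D := by grw [hsum]; simp only [add_assoc]; rfl
        _ ≤ gdist w a b + w b z + c + ((e + 1 : ℕ) + 1) * D := by gcongr

lemma hopDist_le_or_of_near
    (hw : ∀ a b, w a b = w b a)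
    (hST : ∀ x ∈ S, ∀ y ∈ S,
      hopDist w⁺ 1 x y ≤ gdist w x y ∨ ∃ t ∈ T, hopDist w⁺ 1 x t ≤ gdist w x y)
    {x a b y : V} (β₁ β₂ : ℕ) (ha : ∃ s ∈ S, hopDist w⁺ h a s ≤ K)
    (hb : ∃ s ∈ S, hopDist w⁺ h s b ≤ K) :
    hopDist w⁺ (β₁ + h + 1 + h + β₂) x y ≤
        hopDist w⁺ β₁ x a + gdist w a b + hopDist w⁺ β₂ b y + 4 * K ∨
      ∃ t ∈ T, hopDist w⁺ (β₁ + h + 1) x t ≤ hopDist w⁺ β₁ x a + gdist w a b + 3 * K := by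
  obtain ⟨u', hu', hau'⟩ := ha
  obtain ⟨v', hv', hv'b⟩ := hb
  have hu'v' : gdist w u' v' ≤ K + gdist w a b + K := by
    calc gdist w u' v' ≤ gdist w a u' + gdist w a b + gdist w v' b := by
          rw [gdist_comm hw a u', gdist_comm hw v' b]
          exact (gdist_triangle w u' a v').trans (by grw [gdist_triangle w a b v', add_assoc])
      _ ≤ K + gdist w a b + K := by
          grw [gdist_le_hopDist_addShortcuts h a u', gdist_le_hopDist_addShortcuts h v' b, hau',
            hv'b]
  have hxu' : hopDist w⁺ (β₁ + h) x u' ≤ hopDist w⁺ β₁ x a + K :=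
    (hopDist_add_le _ β₁ h x a u').trans (by grw [hau'])
  rcases hST u' hu' v' hv' with hu'v'₁ | ⟨t, ht, hu't⟩
  · left
    calc hopDist w⁺ (β₁ + h + 1 + h + β₂) x y
        ≤ hopDist w⁺ (β₁ + h) x u' + hopDist w⁺ 1 u' v' + hopDist w⁺ h v' b +
            hopDist w⁺ β₂ b y := by
          grw [hopDist_add_le _ (β₁ + h + 1 + h) β₂ x b y, hopDist_add_le _ (β₁ + h + 1) h x v' b,
            hopDist_add_le _ (β₁ + h) 1 x u' v']
      _ ≤ hopDist w⁺ β₁ x a + K + (K + gdist w a b + K) + K + hopDist w⁺ β₂ b y := by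
          grw [hxu', hu'v'₁, hu'v', hv'b]
      _ = hopDist w⁺ β₁ x a + gdist w a b + hopDist w⁺ β₂ b y + 4 * K := by ring
  · refine Or.inr ⟨t, ht, ?_⟩
    calc hopDist w⁺ (β₁ + h + 1) x t ≤ hopDist w⁺ β₁ x a + K + (K + gdist w a b + K) := by
          grw [hopDist_add_le _ (β₁ + h) 1 x u' t, hxu', hu't, hu'v']
      _ = hopDist w⁺ β₁ x a + gdist w a b + 3 * K := by ring

theorem hopDist_le_or_of_gdist_le_mul [Fintype V] (hw : ∀ a b, w a b = w b a) (hL : L ≠ ⊤)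
    {r : ℕ} (hr : 1 ≤ r)
    (hstep : ∀ x y, gdist w x y ≤ L →
      hopDist w⁺ h x y ≤ gdist w x y + D ∨ ∃ s ∈ S, hopDist w⁺ h x s ≤ K)
    (hST : ∀ x ∈ S, ∀ y ∈ S,
      hopDist w⁺ 1 x y ≤ gdist w x y ∨ ∃ t ∈ T, hopDist w⁺ 1 x t ≤ gdist w x y)
    {u v : V} (huv : gdist w u v ≤ r * L) :
    hopDist w⁺ ((r + 1) * h + r) u v ≤ gdist w u v + r * D + 4 * K ∨
      ∃ t ∈ T, hopDist w⁺ ((r + 1) * h + r) u t ≤ gdist w u v + r * D + 3 * K := by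
  obtain ⟨r, rfl⟩ := Nat.exists_eq_add_of_le' hr
  obtain ⟨t, rfl, ht⟩ := exists_walkWeight_le_gdist w (ne_top_of_le_ne_top (by finiteness) huv)
  obtain ⟨e, he, c, hc, hchain⟩ := exists_pieceChain_of_walk hL t (a := u) (x := u) (s := 0)
    (e := r) (by simp) zero_le (by simpa using ht.trans huv)
  have hcD : c + (e + 1) * D ≤ gdist w u (t.getLastD u) + (r + 1 : ℕ) * D := by
    grw [hc, zero_add, ht]; gcongr; exact_mod_cast (by omega : e + 1 ≤ r + 1)
  rcases hchain.hopDist_le_or hw hstep with hgood | ⟨a, b, m₁, m₂, hm, ha, hb, hsum⟩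
  · refine Or.inl ((hopDist_antitone _ _ _ ?_).trans (hgood.trans (hcD.trans le_self_add)))
    nlinarith
  rcases hopDist_le_or_of_near hw hST (m₁ * (h + 1)) (m₂ * (h + 1)) ha hb with
    hlong | ⟨t', ht', hshort⟩
  · refine Or.inl ((hopDist_antitone _ _ _ ?_).trans (hlong.trans (by grw [hsum, hcD])))
    nlinarith
  · refine Or.inr ⟨t', ht', (hopDist_antitone _ _ _ ?_).trans (hshort.trans ?_)⟩
    · nlinarith
    · grw [← hcD, ← hsum]
      exact add_le_add_left le_self_add _

end StepAnalysis

lemma tzHopset_bunch_or_pivot {w : V → V → ℝ≥0∞} {Vs : ℕ → Set V} {p : ℕ → V → V} {k j : ℕ}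
    (hp : ∀ i, 1 ≤ i → i ≤ k → ∀ v, p i v ∈ Vs i) (hj : j ≤ k) {x y : V}
    (hx : x ∈ Vs j) (hy : y ∈ Vs j) :
    hopDist (addShortcuts w (tzHopset w Vs p k)) 1 x y ≤ gdist w x y ∨
      ∃ t ∈ Vs (j + 1), hopDist (addShortcuts w (tzHopset w Vs p k)) 1 x t ≤ gdist w x y := by
  by_cases hxT : x ∈ Vs (j + 1)
  · exact Or.inr ⟨x, hxT, by simp⟩
  have hedge {y : V} (hxy : (x, y) ∈ tzHopset w Vs p k) := hopDist_addShortcuts_one_le (w := w) hxy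
  by_cases hbunch : gdist w x y < pivotDist w p k (j + 1) x
  · exact Or.inl (hedge ⟨j, hj, hx, hxT, Or.inl ⟨hy, hbunch⟩⟩)
  rw [not_lt, pivotDist] at hbunch
  split_ifs at hbunch with hjk
  · exact Or.inr ⟨p (j + 1) x, hp _ j.succ_pos hjk x,
      (hedge ⟨j, hj, hx, hxT, Or.inr ⟨hjk, rfl⟩⟩).trans hbunch⟩
  · simp_all

lemma mul_sub_pow_add_four_mul_pow (r i : ℕ) :
    r * ((r + 4) ^ i - r ^ i) + 4 * (r + 4) ^ i = (r + 4) ^ (i + 1) - r ^ (i + 1) := by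
  have h₁ : r ^ i ≤ (r + 4) ^ i := Nat.pow_le_pow_left (by omega) i
  have h₂ : r ^ (i + 1) ≤ (r + 4) ^ (i + 1) := Nat.pow_le_pow_left (by omega) (i + 1)
  zify [h₁, h₂]
  ring

lemma pow_add_mul_sub_pow_add_three_mul_pow_le (r i : ℕ) :
    r ^ (i + 1) + r * ((r + 4) ^ i - r ^ i) + 3 * (r + 4) ^ i ≤ (r + 4) ^ (i + 1) := by
  have h₁ : r ^ i ≤ (r + 4) ^ i := Nat.pow_le_pow_left (by omega) i
  zify [h₁]
  rw [pow_succ, pow_succ]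
  nlinarith [pow_nonneg (by positivity : (0 : ℤ) ≤ r + 4) i]

theorem tz_hopset_stretch_analysis_general
    (V : Type) [Fintype V] (w : V → V → ℝ≥0∞)
    (hsymm : ∀ u v : V, w u v = w v u)
    (k r : ℕ) (hr : 2 ≤ r)
    (Vs : ℕ → Set V)
    (hV0 : Vs 0 = Set.univ)
    (p : ℕ → V → V)
    (hpivot : ∀ i, 1 ≤ i → i ≤ k → ∀ v : V,
      p i v ∈ Vs i ∧ gdist w v (p i v) = ⨅ x ∈ Vs i, gdist w v x)
    (μ : ℝ) :
    ∀ i ≤ k, ∀ u v : V,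
      gdist w u v ≤ (r : ℝ≥0∞) ^ i * ENNReal.ofReal μ →
      (hopDist (addShortcuts w (tzHopset w Vs p k)) (hopSeq r i) u v ≤
          gdist w u v + (((r + 4) ^ i - r ^ i : ℕ) : ℝ≥0∞) * ENNReal.ofReal μ) ∨
      (∃ u' ∈ Vs (i + 1),
        hopDist (addShortcuts w (tzHopset w Vs p k)) (hopSeq r i) u u' ≤
          ((r + 4 : ℕ) : ℝ≥0∞) ^ i * ENNReal.ofReal μ) := by
  have hp : ∀ i, 1 ≤ i → i ≤ k → ∀ v, p i v ∈ Vs i := fun i h₁ h₂ v => (hpivot i h₁ h₂ v).1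
  set M := ENNReal.ofReal μ
  intro i
  induction i with
  | zero =>
    intro hk u v huv
    rw [pow_zero, one_mul] at huv
    rcases tzHopset_bunch_or_pivot hp hk (hV0 ▸ Set.mem_univ u) (hV0 ▸ Set.mem_univ v) with h | ⟨t, ht, h⟩
    · exact Or.inl (by simpa [hopSeq] using h)
    · exact Or.inr ⟨t, ht, by simpa [hopSeq] using h.trans huv⟩
  | succ i ih =>
    intro hi u v huv
    rw [pow_succ', mul_assoc] at huv
    rcases hopDist_le_or_of_gdist_le_mul hsymm (by finiteness) (by omega) (ih (by omega))
      (fun x hx y hy => tzHopset_bunch_or_pivot hp hi hx hy) huv with h | ⟨t, ht, h⟩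
    · refine Or.inl (h.trans_eq ?_)
      rw [add_assoc, ← mul_sub_pow_add_four_mul_pow]
      push_cast
      ring
    · refine Or.inr ⟨t, ht, h.trans ?_⟩
      grw [huv]
      calc (r : ℝ≥0∞) * ((r : ℝ≥0∞) ^ i * M) + r * (((r + 4) ^ i - r ^ i : ℕ) * M) +
            3 * (((r + 4 : ℕ) : ℝ≥0∞) ^ i * M)
          = ((r ^ (i + 1) + r * ((r + 4) ^ i - r ^ i) + 3 * (r + 4) ^ i : ℕ) : ℝ≥0∞) * M := by
            push_cast; ring
        _ ≤ ((r + 4 : ℕ) : ℝ≥0∞) ^ (i + 1) * M := by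
            rw [← Nat.cast_pow]
            gcongr
            exact pow_add_mul_sub_pow_add_three_mul_pow_le r i

/-- The inductive stretch/hopbound analysis of the Thorup–Zwick-style
hopset: for every unit `μ > 0`, every `i ∈ [0,k]`, and every pair `u, v` with
`dist(u,v) ≤ r^i·μ`, either `dist^{(h_i)}_{G∪H}(u,v) ≤ dist(u,v) + ((r+4)^i − r^i)·μ`,
or some `u' ∈ V_{i+1}` satisfies `dist^{(h_i)}_{G∪H}(u,u') ≤ (r+4)^i·μ`. -/
theorem tz_hopset_stretch_analysis
    (V : Type) [Fintype V] (w : V → V → ℝ≥0∞)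
    (hsymm : ∀ u v : V, w u v = w v u) (hpos : ∀ u v : V, 0 < w u v)
    (k r : ℕ) (hk : 1 ≤ k) (hr : 2 ≤ r)
    (Vs : ℕ → Set V)
    (hV0 : Vs 0 = Set.univ) (hVlast : Vs (k + 1) = ∅)
    (hnested : ∀ i ≤ k, Vs (i + 1) ⊆ Vs i)
    (p : ℕ → V → V)
    (hpivot : ∀ i, 1 ≤ i → i ≤ k → ∀ v : V,
      p i v ∈ Vs i ∧ gdist w v (p i v) = ⨅ x ∈ Vs i, gdist w v x)
    (μ : ℝ) (hμ : 0 < μ) :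
    ∀ i ≤ k, ∀ u v : V,
      gdist w u v ≤ (r : ℝ≥0∞) ^ i * ENNReal.ofReal μ →
      (hopDist (addShortcuts w (tzHopset w Vs p k)) (hopSeq r i) u v ≤
          gdist w u v + (((r + 4) ^ i - r ^ i : ℕ) : ℝ≥0∞) * ENNReal.ofReal μ) ∨
      (∃ u' ∈ Vs (i + 1),
        hopDist (addShortcuts w (tzHopset w Vs p k)) (hopSeq r i) u u' ≤
          ((r + 4 : ℕ) : ℝ≥0∞) ^ i * ENNReal.ofReal μ) :=
  tz_hopset_stretch_analysis_general V w hsymm k r hr Vs hV0 p hpivot μ
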